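/- Coercivity of the radial divergence on star-shaped cells (key inequality in the proof of Lemma A.1). Let T ⊆ ℝ³ be a nonempty bounded open set that is star-shaped with respect to a point x_T ∈ T. Let r : ℝ³ → ℂ be a polynomial function and set d(x) := 3 r(x) + ∇r(x) · (x − x_T) (= div(r(x)(x − x_T))). Then Re ( ∫_T d(x) · conj(r(x)) dx ) ≥ (3/2) ∫_T |r(x)|² dx. -/

import Mathlib

/-! For `0 < t ≤ 1` the homothety `x ↦ x₀ + t • (x - x₀)` maps the star-shaped set `T` into
itself and has Jacobian `tᵈ`, so `Φ t = ∫_T tᵈ ‖f (x₀ + t • (x - x₀))‖²` never exceeds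
`Φ 1 = ∫_T ‖f‖²`. Hence `0 ≤ Φ' 1 = ∫_T (d ‖f‖² + 2 ⟪f, Df (x - x₀)⟫)`, and for `f = r`, `d = 3`
this integrand is `2 Re (div (r (x - x_T)) · conj r) - 3 |r|²`. -/

open MeasureTheory Set Module

noncomputable section

abbrev E3 : Type := EuclideanSpace ℝ (Fin 3)
abbrev C3 : Type := EuclideanSpace ℂ (Fin 3)

/-- Evaluation of a complex polynomial in three variables at a real point. -/
def evalP (P : MvPolynomial (Fin 3) ℂ) (x : E3) : ℂ :=
  MvPolynomial.eval (fun i => ((x i : ℝ) : ℂ)) P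

/-- `div (r(x) (x - x₀)) = 3 r(x) + ∇r(x) · (x - x₀)` for the polynomial field
`x ↦ r(x) (x - x₀)`, computed via formal partial derivatives. -/
def divRadial (P : MvPolynomial (Fin 3) ℂ) (x₀ x : E3) : ℂ :=
  3 * evalP P x
    + ∑ i : Fin 3, evalP (MvPolynomial.pderiv i P) x * (((x i - x₀ i : ℝ)) : ℂ)

theorem MvPolynomial.hasDerivAt_eval_comp {σ 𝔸 : Type*} [Fintype σ] [NormedCommRing 𝔸]
    [NormedAlgebra ℝ 𝔸] (p : MvPolynomial σ 𝔸) {γ : ℝ → σ → 𝔸} {γ' : σ → 𝔸} {t : ℝ}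
    (hγ : ∀ i, HasDerivAt (fun s => γ s i) (γ' i) t) :
    HasDerivAt (fun s => eval (γ s) p) (∑ i, eval (γ t) (pderiv i p) * γ' i) t := by
  induction p using MvPolynomial.induction_on with
  | C a => simpa using hasDerivAt_const t a
  | add p q hp hq =>
    simp only [map_add, add_mul, Finset.sum_add_distrib]
    exact hp.add hq
  | mul_X p n hp =>
    classical
    simp only [map_mul, eval_X]
    refine (hp.mul (hγ n)).congr_deriv ?_
    simp only [Derivation.leibniz, pderiv_X, Pi.single_apply, smul_eq_mul, map_add, map_mul,
      eval_X, apply_ite (eval _), map_zero, mul_ite, mul_one, mul_zero, ite_mul, zero_mul, add_mul,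
      Finset.sum_add_distrib, Finset.sum_ite_eq, Finset.mem_univ, if_true]
    rw [Finset.sum_mul, add_comm]
    exact congrArg _ (Finset.sum_congr rfl fun i _ => by ring)

theorem Continuous.integrableOn_of_isBounded {X G : Type*} [PseudoMetricSpace X] [ProperSpace X]
    [MeasurableSpace X] [OpensMeasurableSpace X] {μ : Measure X} [IsFiniteMeasureOnCompacts μ]
    [NormedAddCommGroup G] {f : X → G} (hf : Continuous f) {T : Set X}
    (hT : Bornology.IsBounded T) : IntegrableOn f T μ :=
  (hf.continuousOn.integrableOn_compact' hT.isCompact_closure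
    isClosed_closure.measurableSet).mono_set subset_closure

theorem hasDerivAt_setIntegral_of_continuous {X G : Type*} [PseudoMetricSpace X] [ProperSpace X]
    [MeasurableSpace X] [OpensMeasurableSpace X] {μ : Measure X} [IsFiniteMeasureOnCompacts μ]
    [NormedAddCommGroup G] [NormedSpace ℝ G] {T : Set X} (hT : Bornology.IsBounded T)
    {F F' : ℝ → X → G} (hF : ∀ t, Continuous (F t)) (hF' : Continuous (Function.uncurry F'))
    (hderiv : ∀ t x, HasDerivAt (F · x) (F' t x) t) (t₀ : ℝ) :
    HasDerivAt (fun t => ∫ x in T, F t x ∂μ) (∫ x in T, F' t₀ x ∂μ) t₀ := by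
  obtain ⟨C, hC⟩ := ((isCompact_closedBall t₀ 1).prod
    hT.isCompact_closure).exists_bound_of_continuousOn hF'.continuousOn
  have hbound : ∀ᵐ x ∂μ.restrict T, ∀ t ∈ Metric.closedBall t₀ 1, ‖F' t x‖ ≤ C := by
    filter_upwards [ae_restrict_of_ae_restrict_of_subset subset_closure
      (ae_restrict_mem isClosed_closure.measurableSet)] with x hx t ht
    exact hC (t, x) ⟨ht, hx⟩
  exact (hasDerivAt_integral_of_dominated_loc_of_deriv_le (Metric.closedBall_mem_nhds t₀ one_pos)
    (.of_forall fun t => (hF t).aestronglyMeasurable) ((hF t₀).integrableOn_of_isBounded hT)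
    (hF'.comp (Continuous.prodMk_right t₀)).aestronglyMeasurable hbound
    (integrableOn_const hT.measure_lt_top.ne) (.of_forall fun x t _ => hderiv t x)).2

theorem IsLocalMaxOn.hasDerivAt_nonneg {f : ℝ → ℝ} {f' a : ℝ} (h : IsLocalMaxOn f (Iic a) a)
    (hf : HasDerivAt f f' a) : 0 ≤ f' := by
  have hcone : (-1 : ℝ) ∈ posTangentConeAt (Iic a) a :=
    mem_posTangentConeAt_of_segment_subset
      ((convex_Iic a).segment_subset (mem_Iic.2 le_rfl) (by simp))
  simpa using h.hasFDerivWithinAt_nonpos hf.hasFDerivAt.hasFDerivWithinAt hcone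

section StarConvex

variable {E : Type*} [NormedAddCommGroup E] [NormedSpace ℝ E] [FiniteDimensional ℝ E]
  [MeasurableSpace E] [BorelSpace E] (μ : Measure E) [μ.IsAddHaarMeasure] {x₀ : E} {T : Set E}

theorem StarConvex.setIntegral_comp_homothety_le (hT : StarConvex ℝ x₀ T) (hTm : MeasurableSet T)
    {q : E → ℝ} (hq : ∀ x ∈ T, 0 ≤ q x) (hqi : IntegrableOn q T μ) {t : ℝ} (ht₀ : 0 < t)
    (ht₁ : t ≤ 1) :
    ∫ x in T, t ^ finrank ℝ E * q (x₀ + t • (x - x₀)) ∂μ ≤ ∫ x in T, q x ∂μ := by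
  set h : E → E := fun x => x₀ + t • (x - x₀)
  have hh : ∀ x ∈ T, HasFDerivWithinAt h (t • ContinuousLinearMap.id ℝ E) T x := fun x _ =>
    (((hasFDerivAt_id x).sub_const x₀).const_smul t).const_add x₀ |>.hasFDerivWithinAt
  have hinj : InjOn h T := fun a _ b _ hab => by
    simpa [h, ht₀.ne'] using hab
  have himage : h '' T ⊆ T := by
    rintro _ ⟨x, hx, rfl⟩
    convert hT hx (sub_nonneg.2 ht₁) ht₀.le (by ring) using 1
    simp only [h, smul_sub, sub_smul, one_smul]
    abel
  calc ∫ x in T, t ^ finrank ℝ E * q (h x) ∂μ = ∫ x in h '' T, q x ∂μ := by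
        rw [integral_image_eq_integral_abs_det_fderiv_smul μ hTm hh hinj]
        simp [ContinuousLinearMap.det, LinearMap.det_smul, abs_of_pos ht₀]
    _ ≤ ∫ x in T, q x ∂μ :=
        setIntegral_mono_set hqi ((ae_restrict_mem hTm).mono hq) himage.eventuallyLE

theorem StarConvex.setIntegral_finrank_mul_norm_sq_add_inner_fderiv_nonneg
    {F : Type*} [NormedAddCommGroup F] [InnerProductSpace ℝ F] (hT : StarConvex ℝ x₀ T)
    (hTm : MeasurableSet T) (hTb : Bornology.IsBounded T) {f : E → F} (hf : ContDiff ℝ 1 f) :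
    0 ≤ ∫ x in T, (finrank ℝ E * ‖f x‖ ^ 2 + 2 * inner ℝ (f x) (fderiv ℝ f x (x - x₀))) ∂μ := by
  set d := finrank ℝ E
  set Φ : ℝ → ℝ := fun t => ∫ x in T, t ^ d * ‖f (x₀ + t • (x - x₀))‖ ^ 2 ∂μ
  have hray : ∀ t x, HasDerivAt (fun s : ℝ => f (x₀ + s • (x - x₀)))
      (fderiv ℝ f (x₀ + t • (x - x₀)) (x - x₀)) t := fun t x => by
    have hline := ((hasDerivAt_id' t).smul_const (x - x₀)).const_add x₀
    exact ((hf.differentiable one_ne_zero _).hasFDerivAt.comp_hasDerivAt t hline).congr_deriv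
      (by rw [one_smul])
  have hΦ : HasDerivAt Φ (∫ x in T, (d * ‖f x‖ ^ 2 + 2 * inner ℝ (f x) (fderiv ℝ f x (x - x₀))) ∂μ)
      1 := by
    have hf' := hf.continuous_fderiv one_ne_zero
    have := hasDerivAt_setIntegral_of_continuous hTb (μ := μ)
      (F' := fun t x => d * t ^ (d - 1) * ‖f (x₀ + t • (x - x₀))‖ ^ 2
        + t ^ d * (2 * inner ℝ (f (x₀ + t • (x - x₀))) (fderiv ℝ f (x₀ + t • (x - x₀)) (x - x₀))))
      (fun t => by fun_prop) (by fun_prop)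
      (fun t x => (hasDerivAt_pow d t).mul (hray t x).norm_sq) 1
    simpa using this
  have hmax : IsLocalMaxOn Φ (Iic 1) 1 := by
    filter_upwards [Ioc_mem_nhdsLE zero_lt_one] with t ht
    simpa [Φ] using hT.setIntegral_comp_homothety_le μ hTm (q := (‖f ·‖ ^ 2))
      (fun x _ => by positivity) ((hf.continuous.norm.pow 2).integrableOn_of_isBounded hTb)
      ht.1 ht.2
  exact hmax.hasDerivAt_nonneg hΦ

end StarConvex

theorem contDiff_evalP {n : WithTop ℕ∞} (P : MvPolynomial (Fin 3) ℂ) : ContDiff ℝ n (evalP P) :=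
  (AnalyticOnNhd.eval_continuousLinearMap'
    (fun i => Complex.ofRealCLM.comp (EuclideanSpace.proj i : E3 →L[ℝ] ℝ)) P).contDiff

theorem fderiv_evalP_apply (P : MvPolynomial (Fin 3) ℂ) (x v : E3) :
    fderiv ℝ (evalP P) x v = ∑ i, evalP (MvPolynomial.pderiv i P) x * (v i : ℂ) := by
  have hline := ((hasDerivAt_id' (0 : ℝ)).smul_const v).const_add x
  have hchain := ((contDiff_evalP (n := 1) P).differentiable one_ne_zero
    _).hasFDerivAt.comp_hasDerivAt (0 : ℝ) hline
  have hpoly : HasDerivAt (fun s : ℝ => evalP P (x + s • v))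
      (∑ i, evalP (MvPolynomial.pderiv i P) x * (v i : ℂ)) 0 := by
    refine (P.hasDerivAt_eval_comp (γ' := fun i => (v i : ℂ)) fun i => ?_).congr_deriv
      (by simp [evalP])
    simpa using (((hasDerivAt_id' (0 : ℝ)).mul_const (v i)).const_add (x i)).ofReal_comp
  simpa using hchain.unique hpoly

theorem divRadial_eq (P : MvPolynomial (Fin 3) ℂ) (x₀ x : E3) :
    divRadial P x₀ x = 3 * evalP P x + fderiv ℝ (evalP P) x (x - x₀) := by
  simp [divRadial, fderiv_evalP_apply]

theorem re_divRadial_mul_conj (P : MvPolynomial (Fin 3) ℂ) (x₀ x : E3) :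
    (divRadial P x₀ x * (starRingEnd ℂ) (evalP P x)).re = 3 / 2 * ‖evalP P x‖ ^ 2 +
      1 / 2 * (finrank ℝ E3 * ‖evalP P x‖ ^ 2 +
        2 * inner ℝ (evalP P x) (fderiv ℝ (evalP P) x (x - x₀))) := by
  rw [divRadial_eq, add_mul, Complex.add_re, mul_assoc, Complex.mul_conj, Complex.normSq_eq_norm_sq]
  simp only [Complex.inner, finrank_euclideanSpace_fin, Complex.re_mul_ofReal, Complex.re_ofNat]
  ring

theorem radial_divergence_coercive_star_shaped_general
    (T : Set E3) (xT : E3)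
    (hbd : Bornology.IsBounded T) (hopen : IsOpen T)
    (hstar : StarConvex ℝ xT T)
    (P : MvPolynomial (Fin 3) ℂ) :
    (3 / 2 : ℝ) * ∫ x in T, ‖evalP P x‖ ^ 2 ≤
      (∫ x in T, divRadial P xT x * (starRingEnd ℂ) (evalP P x)).re := by
  have hr : ContDiff ℝ 1 (evalP P) := contDiff_evalP P
  have hrc := hr.continuous
  have hr' := hr.continuous_fderiv one_ne_zero
  set g : E3 → ℝ := fun x =>
    finrank ℝ E3 * ‖evalP P x‖ ^ 2 + 2 * inner ℝ (evalP P x) (fderiv ℝ (evalP P) x (x - xT))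
  have hg : 0 ≤ ∫ x in T, g x :=
    hstar.setIntegral_finrank_mul_norm_sq_add_inner_fderiv_nonneg volume hopen.measurableSet hbd hr
  have hint : IntegrableOn (fun x => divRadial P xT x * (starRingEnd ℂ) (evalP P x)) T := by
    simp only [divRadial_eq]
    exact Continuous.integrableOn_of_isBounded (by fun_prop) hbd
  have hre := integral_re hint
  simp only [RCLike.re_to_complex, re_divRadial_mul_conj] at hre
  rw [← hre, integral_add, integral_const_mul, integral_const_mul]
  · linarith
  · exact (hrc.norm.pow 2).integrableOn_of_isBounded hbd |>.const_mul _
  · have hgc : Continuous g := by fun_prop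
    exact hgc.integrableOn_of_isBounded hbd |>.const_mul _

/-- **Coercivity of the radial divergence on star-shaped cells**
(key inequality in the proof of Lemma A.1). -/
theorem radial_divergence_coercive_star_shaped
    (T : Set E3) (xT : E3) (hxT : xT ∈ T)
    (hbd : Bornology.IsBounded T) (hopen : IsOpen T)
    (hstar : StarConvex ℝ xT T)
    (P : MvPolynomial (Fin 3) ℂ) :
    (3 / 2 : ℝ) * ∫ x in T, ‖evalP P x‖ ^ 2 ≤
      (∫ x in T, divRadial P xT x * (starRingEnd ℂ) (evalP P x)).re :=
  radial_divergence_coercive_star_shaped_general T xT hbd hopen hstar P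

end
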